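/- arXiv:1211.3907 — 3 statements merged into one kernel-verified Lean document; each statement's English description precedes it below -/
import Mathlib

section
/- (Meyer's monotone convergence theorem, parts (a) and (b).) Let S ⊆ ℝ^p, let f : S → ℝ be continuous, and let ψ : S → S be a continuous algorithm map satisfying f(ψ(x)) < f(x) for every x ∈ S with ψ(x) ≠ x. Suppose that for an initial point x_0 ∈ S the sublevel set L_f(x_0) = {x ∈ S : f(x) ≤ f(x_0)} is compact. Then the iterates x_{m+1} = ψ(x_m) satisfy lim_{m→∞} ‖x_{m+1} − x_m‖₂ = 0, and every cluster point of the sequence (x_m) is a fixed point of ψ. -/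
/-!
Along the iterates `f` is nonincreasing and stays in the compact sublevel set, so `f (x n)`
decreases to a limit `c`. If `x (φ n) → z` along indices `φ n → ∞`, continuity gives
`f z = c`, and since `x (φ n + 1) = ψ (x (φ n)) → ψ z` also `f (ψ z) = c`; strict descent then
forces `ψ z = z`. For part (a), every subsequence of `dist (x (n + 1)) (x n) = dist (ψ (x n)) (x n)`
has, by compactness, a further subsequence along which `x` converges to a fixed point `z`, so
it tends to `dist (ψ z) z = 0`.
-/

open Filter Topology

lemma ContinuousOn.tendsto_comp_of_forall_mem {X Y ι : Type*} [TopologicalSpace X]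
    [TopologicalSpace Y] {S : Set X} {g : X → Y} {y : ι → X} {l : Filter ι} {z : X}
    (hg : ContinuousOn g S) (hz : z ∈ S) (hy : ∀ i, y i ∈ S) (h : Tendsto y l (𝓝 z)) :
    Tendsto (g ∘ y) l (𝓝 (g z)) :=
  (hg z hz).tendsto.comp (tendsto_nhdsWithin_iff.2 ⟨h, Eventually.of_forall hy⟩)

namespace DescentIteration

variable {X : Type*} {S : Set X} {f : X → ℝ} {ψ : X → X} {x : ℕ → X}

lemma mem_of_mapsTo (hmap : Set.MapsTo ψ S S) (hx0 : x 0 ∈ S)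
    (hiter : ∀ n, x (n + 1) = ψ (x n)) (n : ℕ) : x n ∈ S := by
  induction n with
  | zero => exact hx0
  | succ n ih => exact hiter n ▸ hmap ih

lemma antitone_comp (hdesc : ∀ y ∈ S, ψ y ≠ y → f (ψ y) < f y) (hmem : ∀ n, x n ∈ S)
    (hiter : ∀ n, x (n + 1) = ψ (x n)) : Antitone (f ∘ x) := by
  refine antitone_nat_of_succ_le fun n => ?_
  simp only [Function.comp_apply, hiter n]
  by_cases hfix : ψ (x n) = x n
  · rw [hfix]
  · exact (hdesc _ (hmem n) hfix).le

lemma mem_sublevel (hdesc : ∀ y ∈ S, ψ y ≠ y → f (ψ y) < f y) (hmem : ∀ n, x n ∈ S)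
    (hiter : ∀ n, x (n + 1) = ψ (x n)) (n : ℕ) : x n ∈ {z ∈ S | f z ≤ f (x 0)} :=
  ⟨hmem n, antitone_comp hdesc hmem hiter n.zero_le⟩

section Topological

variable [TopologicalSpace X]

lemma exists_tendsto_comp (hf : ContinuousOn f S)
    (hdesc : ∀ y ∈ S, ψ y ≠ y → f (ψ y) < f y) (hmem : ∀ n, x n ∈ S)
    (hiter : ∀ n, x (n + 1) = ψ (x n)) (hcpt : IsCompact {z ∈ S | f z ≤ f (x 0)}) :
    ∃ c, Tendsto (f ∘ x) atTop (𝓝 c) := by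
  have hbdd : BddBelow (Set.range (f ∘ x)) :=
    (hcpt.bddBelow_image (hf.mono fun _ hz => hz.1)).mono <| by
      rintro _ ⟨n, rfl⟩
      exact ⟨x n, mem_sublevel hdesc hmem hiter n, rfl⟩
  exact ⟨_, tendsto_atTop_ciInf (antitone_comp hdesc hmem hiter) hbdd⟩

lemma map_eq_of_tendsto (hmap : Set.MapsTo ψ S S) (hf : ContinuousOn f S)
    (hψ : ContinuousOn ψ S) (hdesc : ∀ y ∈ S, ψ y ≠ y → f (ψ y) < f y) (hmem : ∀ n, x n ∈ S)
    (hiter : ∀ n, x (n + 1) = ψ (x n)) {c : ℝ} (hc : Tendsto (f ∘ x) atTop (𝓝 c))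
    {φ : ℕ → ℕ} (hφ : Tendsto φ atTop atTop) {z : X} (hz : z ∈ S)
    (hxz : Tendsto (x ∘ φ) atTop (𝓝 z)) : ψ z = z := by
  have hfz : f z = c :=
    tendsto_nhds_unique (hf.tendsto_comp_of_forall_mem hz (fun n => hmem _) hxz) (hc.comp hφ)
  have hnext : ψ ∘ x ∘ φ = x ∘ (· + 1) ∘ φ := funext fun n => (hiter _).symm
  have hψxz : Tendsto (x ∘ (· + 1) ∘ φ) atTop (𝓝 (ψ z)) :=
    hnext ▸ hψ.tendsto_comp_of_forall_mem hz (fun n => hmem _) hxz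
  have hfψz : f (ψ z) = c :=
    tendsto_nhds_unique (hf.tendsto_comp_of_forall_mem (hmap hz) (fun n => hmem _) hψxz)
      (hc.comp ((tendsto_add_atTop_nat 1).comp hφ))
  by_contra hne
  exact (hdesc z hz hne).ne (hfψz.trans hfz.symm)

theorem map_eq_of_tendsto_subseq [T2Space X] (hmap : Set.MapsTo ψ S S) (hf : ContinuousOn f S)
    (hψ : ContinuousOn ψ S) (hdesc : ∀ y ∈ S, ψ y ≠ y → f (ψ y) < f y) (hx0 : x 0 ∈ S)
    (hiter : ∀ n, x (n + 1) = ψ (x n)) (hcpt : IsCompact {z ∈ S | f z ≤ f (x 0)})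
    {φ : ℕ → ℕ} (hφ : Tendsto φ atTop atTop) {z : X} (hxz : Tendsto (x ∘ φ) atTop (𝓝 z)) :
    ψ z = z := by
  have hmem := mem_of_mapsTo hmap hx0 hiter
  obtain ⟨c, hc⟩ := exists_tendsto_comp hf hdesc hmem hiter hcpt
  have hz : z ∈ {y ∈ S | f y ≤ f (x 0)} :=
    hcpt.isClosed.mem_of_tendsto hxz (.of_forall fun n => mem_sublevel hdesc hmem hiter _)
  exact map_eq_of_tendsto hmap hf hψ hdesc hmem hiter hc hφ hz.1 hxz

end Topological

theorem tendsto_dist_succ [MetricSpace X] (hmap : Set.MapsTo ψ S S) (hf : ContinuousOn f S)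
    (hψ : ContinuousOn ψ S) (hdesc : ∀ y ∈ S, ψ y ≠ y → f (ψ y) < f y) (hx0 : x 0 ∈ S)
    (hiter : ∀ n, x (n + 1) = ψ (x n)) (hcpt : IsCompact {z ∈ S | f z ≤ f (x 0)}) :
    Tendsto (fun n => dist (x (n + 1)) (x n)) atTop (𝓝 0) := by
  have hmem := mem_of_mapsTo hmap hx0 hiter
  refine tendsto_of_subseq_tendsto fun ns hns => ?_
  obtain ⟨z, hz, ms, hms, hxz⟩ :=
    hcpt.tendsto_subseq fun n => mem_sublevel hdesc hmem hiter (ns n)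
  have hfix : ψ z = z :=
    map_eq_of_tendsto_subseq hmap hf hψ hdesc hx0 hiter hcpt (hns.comp hms.tendsto_atTop) hxz
  have hψxz := hψ.tendsto_comp_of_forall_mem hz.1 (fun n => hmem _) hxz
  refine ⟨ms, ?_⟩
  simpa [hiter, hfix] using hψxz.dist hxz

end DescentIteration

open DescentIteration in
/-- Meyer's monotone convergence theorem, parts (a) and (b): for a continuous algorithm map
with the strict descent property and a compact initial sublevel set, successive iterates get
arbitrarily close and every cluster point of the iterates is a fixed point. -/
theorem meyer_monotone_convergence_ab (p : ℕ)
    (S : Set (EuclideanSpace ℝ (Fin p)))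
    (f : EuclideanSpace ℝ (Fin p) → ℝ)
    (ψ : EuclideanSpace ℝ (Fin p) → EuclideanSpace ℝ (Fin p))
    (hmap : Set.MapsTo ψ S S)
    (hf : ContinuousOn f S)
    (hψ : ContinuousOn ψ S)
    (hdesc : ∀ x ∈ S, ψ x ≠ x → f (ψ x) < f x)
    (x : ℕ → EuclideanSpace ℝ (Fin p))
    (hx0 : x 0 ∈ S)
    (hiter : ∀ n, x (n + 1) = ψ (x n))
    (hcpt : IsCompact {z ∈ S | f z ≤ f (x 0)}) :
    Filter.Tendsto (fun n => ‖x (n + 1) - x n‖) Filter.atTop (nhds 0) ∧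
    ∀ z, (∃ φ : ℕ → ℕ, StrictMono φ ∧ Filter.Tendsto (x ∘ φ) Filter.atTop (nhds z)) →
      ψ z = z := by
  refine ⟨?_, fun z ⟨φ, hφ, hxz⟩ => ?_⟩
  · simpa only [dist_eq_norm] using tendsto_dist_succ hmap hf hψ hdesc hx0 hiter hcpt
  · exact map_eq_of_tendsto_subseq hmap hf hψ hdesc hx0 hiter hcpt hφ.tendsto_atTop hxz
end

section
/- (Meyer's monotone convergence theorem, part (c).) Let S ⊆ ℝ^p, let f : S → ℝ be continuous, and let ψ : S → S be a continuous algorithm map satisfying f(ψ(x)) < f(x) for every x ∈ S with ψ(x) ≠ x. Suppose that for an initial point x_0 ∈ S the sublevel set L_f(x_0) = {x ∈ S : f(x) ≤ f(x_0)} is compact, and suppose that ψ has only finitely many fixed points in L_f(x_0). Then the sequence of iterates x_{m+1} = ψ(x_m) converges to one of the fixed points of ψ. -/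
/-!
Along the iterates the values `f (x m)` decrease and, being bounded below on the compact sublevel
set, converge to some `c`. At a cluster point `z` continuity gives `f z = c = f (ψ z)`, so the
strict descent property forces `ψ z = z`. As every cluster point is fixed and the sublevel set is
compact, `‖x (m + 1) - x m‖ = ‖ψ (x m) - x m‖` tends to `0`. Once the steps are shorter than a
third of the distance from a cluster point `z` to the other fixed points, and the iterates stay
close to the (finite) set of fixed points, a sequence that comes near `z` can never jump to
another fixed point, so it converges to `z`.
-/

open Filter Topology Metric

theorem MapClusterPt.eq_of_tendsto {α X : Type*} [TopologicalSpace X] [T2Space X] {F : Filter α}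
    {u : α → X} {x y : X} (hx : MapClusterPt x F u) (hy : Tendsto u F (𝓝 y)) : x = y :=
  eq_of_nhds_neBot (hx.clusterPt.mono hy)

theorem MapClusterPt.continuousWithinAt_comp {α X Y : Type*} [TopologicalSpace X]
    [TopologicalSpace Y] {F : Filter α} {u : α → X} {x : X} {g : X → Y} {s : Set X}
    (hg : ContinuousWithinAt g s x) (hu : MapClusterPt x F u) (hus : ∀ᶠ a in F, u a ∈ s) :
    MapClusterPt (g x) F (g ∘ u) :=
  hu.tendsto_comp' (hg.tendsto.mono_left (inf_le_inf_left _ (le_principal_iff.2 hus)))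

theorem IsCompact.tendsto_comp_of_eq_of_mapClusterPt {α X Y : Type*} [TopologicalSpace X]
    [TopologicalSpace Y] {K : Set X} (hK : IsCompact K) {F : Filter α} {u : α → X}
    (hu : ∀ᶠ a in F, u a ∈ K) {g : X → Y} (hg : ContinuousOn g K) {y : Y}
    (h : ∀ z ∈ K, MapClusterPt z F u → g z = y) : Tendsto (g ∘ u) F (𝓝 y) := by
  intro V hV
  by_contra hnot
  -- a cluster point of `u` along the times at which `g ∘ u` avoids `V` would have `g`-value in `V`
  set G := F ⊓ 𝓟 {a | g (u a) ∉ V}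
  have hout : ∃ᶠ a in F, g (u a) ∉ V := not_eventually.1 hnot
  have hfreq : ∃ᶠ a in G, u a ∈ K := frequently_inf_principal.2 (hout.and_eventually hu)
  obtain ⟨z, hzK, hz⟩ := hK.exists_mapClusterPt_of_frequently hfreq
  have hgz : MapClusterPt (g z) G (g ∘ u) :=
    hz.continuousWithinAt_comp (hg z hzK) (hu.filter_mono inf_le_left)
  rw [h z hzK (hz.mono inf_le_left)] at hgz
  obtain ⟨a, hin, hnotin⟩ :=
    ((hgz.frequently hV).and_eventually (mem_inf_of_right (mem_principal_self _))).exists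
  exact hnotin hin

theorem Nat.eventually_atTop_of_frequently_of_eventually_succ {P : ℕ → Prop}
    (hfreq : ∃ᶠ n in atTop, P n) (hstep : ∀ᶠ n in atTop, P n → P (n + 1)) :
    ∀ᶠ n in atTop, P n := by
  obtain ⟨N, hN⟩ := eventually_atTop.1 hstep
  obtain ⟨n₀, hn₀N, hn₀⟩ := frequently_atTop.1 hfreq N
  refine eventually_atTop.2 ⟨n₀, fun n hn => ?_⟩
  induction n, hn using Nat.le_induction with
  | base => exact hn₀
  | succ n hn ih => exact hN n (hn₀N.trans hn) ih

/-- Ostrowski's convergence criterion. -/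
theorem exists_tendsto_of_finite_mapClusterPt {X : Type*} [MetricSpace X] {K F : Set X}
    (hK : IsCompact K) (hF : F.Finite) {x : ℕ → X} (hxK : ∀ n, x n ∈ K)
    (hclust : ∀ z ∈ K, MapClusterPt z atTop x → z ∈ F)
    (hstep : Tendsto (fun n => dist (x (n + 1)) (x n)) atTop (𝓝 0)) :
    ∃ z ∈ F, Tendsto x atTop (𝓝 z) := by
  obtain ⟨z, hzK, hz⟩ :=
    hK.exists_mapClusterPt_of_frequently (Frequently.of_forall (f := atTop) hxK)
  obtain ⟨r, hr, hrF⟩ : ∃ r > 0, ball z r ⊆ (F \ {z})ᶜ :=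
    isOpen_iff.1 hF.sdiff.isClosed.isOpen_compl z fun h => h.2 rfl
  refine ⟨z, hclust z hzK hz, Metric.tendsto_nhds.2 fun ε hε => ?_⟩
  obtain ⟨δ, hδ, hδε, hδr⟩ : ∃ δ > 0, δ ≤ ε ∧ 3 * δ ≤ r :=
    ⟨min ε r / 3, by positivity, by linarith [min_le_left ε r], by linarith [min_le_right ε r]⟩
  have hnearF : ∀ᶠ n in atTop, ∃ w ∈ F, dist (x n) w < δ :=
    hK.tendsto_nhdsSet_of_mapClusterPt (Eventually.of_forall hxK) hclust <|
      mem_nhdsSet_iff_forall.2 fun w hw => mem_of_superset (ball_mem_nhds w hδ) fun y hy =>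
        show ∃ w ∈ F, dist y w < δ from ⟨w, hw, hy⟩
  have hstay : ∀ᶠ n in atTop, dist (x n) z < δ → dist (x (n + 1)) z < δ := by
    filter_upwards [(tendsto_add_atTop_nat 1).eventually hnearF, hstep.eventually (gt_mem_nhds hδ)]
      with n ⟨w, hwF, hw⟩ hn hnz
    suffices w = z from this ▸ hw
    by_contra hwz
    have : dist w z < r := by
      calc dist w z ≤ dist w (x (n + 1)) + dist (x (n + 1)) (x n) + dist (x n) z :=
            dist_triangle4 _ _ _ _
        _ < δ + δ + δ := by rw [dist_comm] at hw; gcongr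
        _ ≤ r := by linarith
    exact hrF this ⟨hwF, hwz⟩
  filter_upwards [Nat.eventually_atTop_of_frequently_of_eventually_succ
    (hz.frequently (ball_mem_nhds z hδ)) hstay] with n hn
  exact hn.trans_le hδε

theorem tendsto_dist_succ_of_mapClusterPt_isFixedPt {X : Type*} [PseudoMetricSpace X] {K : Set X}
    (hK : IsCompact K) {ψ : X → X} (hψ : ContinuousOn ψ K) {x : ℕ → X} (hxK : ∀ n, x n ∈ K)
    (hiter : ∀ n, x (n + 1) = ψ (x n)) (hfix : ∀ z ∈ K, MapClusterPt z atTop x → ψ z = z) :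
    Tendsto (fun n => dist (x (n + 1)) (x n)) atTop (𝓝 0) := by
  have hdist : ContinuousOn (fun y => dist (ψ y) y) K :=
    continuous_dist.comp_continuousOn (hψ.prodMk continuousOn_id)
  simp only [hiter]
  exact hK.tendsto_comp_of_eq_of_mapClusterPt (Eventually.of_forall hxK) hdist
    fun z hz hzx => by simp only [hfix z hz hzx, dist_self]

theorem IsCompact.exists_tendsto_comp_of_antitone {ι X : Type*} [Preorder ι] [TopologicalSpace X]
    {K : Set X} (hK : IsCompact K) {f : X → ℝ} (hf : ContinuousOn f K) {x : ι → X}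
    (hxK : ∀ n, x n ∈ K) (hanti : Antitone (f ∘ x)) :
    ∃ c, Tendsto (f ∘ x) atTop (𝓝 c) :=
  ⟨_, tendsto_atTop_ciInf hanti <| (hK.image_of_continuousOn hf).bddBelow.mono <|
    Set.range_subset_iff.2 fun n => Set.mem_image_of_mem f (hxK n)⟩

namespace MonotoneConvergence

variable {X : Type*} {S : Set X} {f : X → ℝ} {ψ : X → X} {x : ℕ → X}

theorem iterate_mem (hmap : Set.MapsTo ψ S S) (hx0 : x 0 ∈ S)
    (hiter : ∀ n, x (n + 1) = ψ (x n)) : ∀ n, x n ∈ S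
  | 0 => hx0
  | n + 1 => hiter n ▸ hmap (iterate_mem hmap hx0 hiter n)

theorem antitone_comp (hdesc : ∀ y ∈ S, ψ y ≠ y → f (ψ y) < f y) (hxS : ∀ n, x n ∈ S)
    (hiter : ∀ n, x (n + 1) = ψ (x n)) : Antitone (f ∘ x) := by
  refine antitone_nat_of_succ_le fun n => ?_
  simp only [Function.comp_apply, hiter]
  by_cases h : ψ (x n) = x n
  · rw [h]
  · exact (hdesc _ (hxS n) h).le

theorem isFixedPt_of_mapClusterPt [TopologicalSpace X] (hmap : Set.MapsTo ψ S S)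
    (hf : ContinuousOn f S) (hψ : ContinuousOn ψ S) (hdesc : ∀ y ∈ S, ψ y ≠ y → f (ψ y) < f y)
    (hxS : ∀ n, x n ∈ S) (hiter : ∀ n, x (n + 1) = ψ (x n)) {c : ℝ}
    (hc : Tendsto (f ∘ x) atTop (𝓝 c)) {z : X} (hzS : z ∈ S) (hz : MapClusterPt z atTop x) :
    ψ z = z := by
  have hxS' : ∀ᶠ n in atTop, x n ∈ S := Eventually.of_forall hxS
  have hfz : f z = c := (hz.continuousWithinAt_comp (hf z hzS) hxS').eq_of_tendsto hc
  have hψx : ψ ∘ x = x ∘ (· + 1) := funext fun n => (hiter n).symm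
  have hψz := hz.continuousWithinAt_comp (hψ z hzS) hxS'
  rw [hψx] at hψz
  have hfψz : f (ψ z) = c :=
    (hψz.continuousWithinAt_comp (hf _ (hmap hzS)) (Eventually.of_forall fun n => hxS (n + 1))
      ).eq_of_tendsto (hc.comp (tendsto_add_atTop_nat 1))
  by_contra h
  exact (hdesc z hzS h).ne (hfψz.trans hfz.symm)

end MonotoneConvergence

open MonotoneConvergence in
/-- Meyer's monotone convergence theorem, part (c): if, in addition, the algorithm map has
only finitely many fixed points in the initial sublevel set, then the iterates converge to
one of the fixed points. -/
theorem meyer_monotone_convergence_c (p : ℕ)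
    (S : Set (EuclideanSpace ℝ (Fin p)))
    (f : EuclideanSpace ℝ (Fin p) → ℝ)
    (ψ : EuclideanSpace ℝ (Fin p) → EuclideanSpace ℝ (Fin p))
    (hmap : Set.MapsTo ψ S S)
    (hf : ContinuousOn f S)
    (hψ : ContinuousOn ψ S)
    (hdesc : ∀ x ∈ S, ψ x ≠ x → f (ψ x) < f x)
    (x : ℕ → EuclideanSpace ℝ (Fin p))
    (hx0 : x 0 ∈ S)
    (hiter : ∀ n, x (n + 1) = ψ (x n))
    (hcpt : IsCompact {z ∈ S | f z ≤ f (x 0)})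
    (hfin : {z ∈ S | f z ≤ f (x 0) ∧ ψ z = z}.Finite) :
    ∃ z, ψ z = z ∧ Filter.Tendsto x Filter.atTop (nhds z) := by
  set L := {z ∈ S | f z ≤ f (x 0)}
  have hLS : L ⊆ S := Set.sep_subset _ _
  have hxS := iterate_mem hmap hx0 hiter
  have hanti := antitone_comp hdesc hxS hiter
  have hxL : ∀ n, x n ∈ L := fun n => ⟨hxS n, hanti (Nat.zero_le n)⟩
  obtain ⟨c, hc⟩ := hcpt.exists_tendsto_comp_of_antitone (hf.mono hLS) hxL hanti
  have hfix : ∀ z ∈ L, MapClusterPt z atTop x → ψ z = z :=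
    fun z hz => isFixedPt_of_mapClusterPt hmap hf hψ hdesc hxS hiter hc hz.1
  obtain ⟨z, hz, hlim⟩ := exists_tendsto_of_finite_mapClusterPt hcpt hfin hxL
    (fun z hz hzx => ⟨hz.1, hz.2, hfix z hz hzx⟩)
    (tendsto_dist_succ_of_mapClusterPt_isFixedPt hcpt (hψ.mono hLS) hxL hiter hfix)
  exact ⟨z, hz.2.2, hlim⟩
end

section
/- Let ℓ : ℝ^p → ℝ be continuously differentiable with x ↦ ℓ(x) + (κ/2)‖x‖₂² convex for some κ > 0, let C_1, …, C_m ⊆ ℝ^p be nonempty closed convex sets, suppose f_κ(x) = ℓ(x) + (κ/2) Σ_{i=1}^m dist(x, C_i)² is coercive (f_κ(x) → ∞ as ‖x‖₂ → ∞), and let μ > κ. Then the MM algorithm map ψ(x) = argmin_y [ℓ(y) + (μ/2) Σ_{i=1}^m ‖y − P_{C_i}(x)‖₂²] is well defined (the minimizer exists and is unique for every x) and ψ is continuous on ℝ^p. -/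
set_option maxHeartbeats 1000000
open RealInnerProductSpace

section Aux
variable {E : Type*} [NormedAddCommGroup E] [InnerProductSpace ℝ E]

lemma mm_mid_norm_sq (a y z : E) :
    ‖(1/2:ℝ)•y + (1/2:ℝ)•z - a‖^2 = 1/2*‖y-a‖^2 + 1/2*‖z-a‖^2 - 1/4*‖y-z‖^2 := by
  have h1 : (1/2:ℝ)•y + (1/2:ℝ)•z - a = (1/2:ℝ)•((y-a)+(z-a)) := by module
  have e1 := norm_add_sq_real (y-a) (z-a)
  have e2 := norm_sub_sq_real (y-a) (z-a)
  have h2 : (y-a) - (z-a) = y - z := by abel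
  rw [h2] at e2
  rw [h1, norm_smul]
  have : ‖(1/2:ℝ)‖ = 1/2 := by norm_num [Real.norm_eq_abs]
  rw [this]; nlinarith [e1, e2]

lemma mm_proj_lipschitz {K : Set E} (hK : Convex ℝ K) {x x' a b : E}
    (ha : a ∈ K) (hb : b ∈ K)
    (hax : ∀ z ∈ K, ‖x - a‖ ≤ ‖x - z‖) (hbx : ∀ z ∈ K, ‖x' - b‖ ≤ ‖x' - z‖) :
    ‖a - b‖ ≤ ‖x - x'‖ := by
  have hbdd : BddBelow (Set.range fun w : K => ‖x - w‖) :=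
    ⟨0, by rintro _ ⟨w, rfl⟩; exact norm_nonneg _⟩
  have hbdd' : BddBelow (Set.range fun w : K => ‖x' - w‖) :=
    ⟨0, by rintro _ ⟨w, rfl⟩; exact norm_nonneg _⟩
  haveI : Nonempty K := ⟨⟨a, ha⟩⟩
  have hia : ‖x - a‖ = ⨅ w : K, ‖x - w‖ :=
    le_antisymm (le_ciInf fun w => hax w w.2) (ciInf_le hbdd ⟨a, ha⟩)
  have hib : ‖x' - b‖ = ⨅ w : K, ‖x' - w‖ :=
    le_antisymm (le_ciInf fun w => hbx w w.2) (ciInf_le hbdd' ⟨b, hb⟩)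
  have h1 : ⟪x - a, b - a⟫ ≤ 0 :=
    (norm_eq_iInf_iff_real_inner_le_zero hK ha).1 hia b hb
  have h2 : ⟪x' - b, a - b⟫ ≤ 0 :=
    (norm_eq_iInf_iff_real_inner_le_zero hK hb).1 hib a ha
  have hdecomp : (a - x) + (x - x') + (x' - b) = a - b := by abel
  have h3 : ⟪a - x, a - b⟫ ≤ 0 := by
    have h : ⟪a - x, a - b⟫ = ⟪x - a, b - a⟫ := by
      rw [show a - x = -(x - a) by abel, show a - b = -(b - a) by abel, inner_neg_neg]
    linarith [h ▸ h1]
  have hsq : ‖a - b‖^2 ≤ ⟪x - x', a - b⟫ := by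
    have h : ⟪a - b, a - b⟫ = ⟪a - x, a - b⟫ + ⟪x - x', a - b⟫ + ⟪x' - b, a - b⟫ := by
      rw [← hdecomp, inner_add_left, inner_add_left]
    rw [← real_inner_self_eq_norm_sq]; linarith
  have hcs : ⟪x - x', a - b⟫ ≤ ‖x - x'‖ * ‖a - b‖ := real_inner_le_norm _ _
  rcases eq_or_lt_of_le (norm_nonneg (a - b)) with h | h
  · rw [← h]; exact norm_nonneg _
  · have h' : ‖a - b‖ * ‖a - b‖ ≤ ‖x - x'‖ * ‖a - b‖ := by nlinarith
    exact le_of_mul_le_mul_right h' h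

end Aux

/-- Under weak convexity of `ℓ`, coercivity of `f_κ`, and `μ > κ`, the MM algorithm map
`ψ(x) = argmin_y [ℓ(y) + (μ/2) ∑ᵢ ‖y − P_{Cᵢ}(x)‖²]` is well defined (the minimizer exists
and is unique for every `x`) and continuous. -/
theorem mm_algorithm_map_well_defined_continuous (p m : ℕ) (hm : 1 ≤ m)
    (κ : ℝ) (hκ : 0 < κ)
    (L : EuclideanSpace ℝ (Fin p) → ℝ)
    (gL : EuclideanSpace ℝ (Fin p) → EuclideanSpace ℝ (Fin p))
    (hdiff : ∀ x, HasGradientAt L (gL x) x)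
    (hcont : Continuous gL)
    (hconv : ConvexOn ℝ Set.univ (fun x => L x + κ / 2 * ‖x‖ ^ 2))
    (C : Fin m → Set (EuclideanSpace ℝ (Fin p)))
    (hne : ∀ i, (C i).Nonempty) (hcl : ∀ i, IsClosed (C i)) (hcv : ∀ i, Convex ℝ (C i))
    (P : Fin m → EuclideanSpace ℝ (Fin p) → EuclideanSpace ℝ (Fin p))
    (hP : ∀ i x, P i x ∈ C i ∧ ∀ z ∈ C i, ‖x - P i x‖ ≤ ‖x - z‖)
    (hcoercive : Filter.Tendsto
      (fun x : EuclideanSpace ℝ (Fin p) =>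
        L x + κ / 2 * ∑ i, (Metric.infDist x (C i)) ^ 2)
      (Filter.cocompact _) Filter.atTop)
    (μ : ℝ) (hμ : κ < μ) :
    ∃ ψ : EuclideanSpace ℝ (Fin p) → EuclideanSpace ℝ (Fin p),
      Continuous ψ ∧
      ∀ x, (∀ y, L (ψ x) + μ / 2 * ∑ i, ‖ψ x - P i x‖ ^ 2 ≤
                 L y + μ / 2 * ∑ i, ‖y - P i x‖ ^ 2) ∧
        ∀ w, (∀ y, L w + μ / 2 * ∑ i, ‖w - P i x‖ ^ 2 ≤
                   L y + μ / 2 * ∑ i, ‖y - P i x‖ ^ 2) → w = ψ x := by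
  classical
  have hμ0 : 0 < μ := hκ.trans hμ
  have hc : 0 < μ * (m:ℝ) - κ := by
    have h1 : μ * 1 ≤ μ * (m:ℝ) := by
      apply mul_le_mul_of_nonneg_left _ hμ0.le
      exact_mod_cast hm
    nlinarith
  set g : EuclideanSpace ℝ (Fin p) → EuclideanSpace ℝ (Fin p) → ℝ :=
    fun x y => L y + μ / 2 * ∑ i, ‖y - P i x‖ ^ 2 with hg_def
  have hLd : Differentiable ℝ L := fun x => (hdiff x).hasFDerivAt.differentiableAt
  have hLc : Continuous L := hLd.continuous
  have hgc : ∀ x, Continuous (g x) := by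
    intro x
    apply hLc.add
    exact continuous_const.mul (continuous_finset_sum _ fun i _ =>
      ((continuous_id.sub continuous_const).norm.pow 2))
  have hgcoer : ∀ x, Filter.Tendsto (g x)
      (Filter.cocompact (EuclideanSpace ℝ (Fin p))) Filter.atTop := by
    intro x
    apply Filter.tendsto_atTop_mono _ hcoercive
    intro y
    have hterm : ∀ i : Fin m, (Metric.infDist y (C i))^2 ≤ ‖y - P i x‖^2 := by
      intro i
      have h1 : Metric.infDist y (C i) ≤ ‖y - P i x‖ := by
        rw [show ‖y - P i x‖ = dist y (P i x) from (dist_eq_norm _ _).symm]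
        exact Metric.infDist_le_dist_of_mem (hP i x).1
      have h0 : 0 ≤ Metric.infDist y (C i) := Metric.infDist_nonneg
      nlinarith
    have hsum : ∑ i, (Metric.infDist y (C i))^2 ≤ ∑ i, ‖y - P i x‖^2 :=
      Finset.sum_le_sum fun i _ => hterm i
    have hsum0 : (0:ℝ) ≤ ∑ i, (Metric.infDist y (C i))^2 :=
      Finset.sum_nonneg fun i _ => sq_nonneg _
    have h2 : κ / 2 * ∑ i, (Metric.infDist y (C i))^2 ≤ μ / 2 * ∑ i, ‖y - P i x‖^2 := by
      nlinarith
    simp only [hg_def]; linarith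
  -- strong convexity (midpoint form)
  have hsc : ∀ x y z, g x ((1/2:ℝ)•y + (1/2:ℝ)•z)
      ≤ 1/2 * g x y + 1/2 * g x z - (μ * (m:ℝ) - κ)/8 * ‖y - z‖^2 := by
    intro x y z
    have hφ := hconv.2 (Set.mem_univ y) (Set.mem_univ z)
      (by norm_num : (0:ℝ) ≤ 1/2) (by norm_num : (0:ℝ) ≤ 1/2) (by norm_num)
    simp only [smul_eq_mul] at hφ
    have hmid0 : ‖(1/2:ℝ)•y + (1/2:ℝ)•z‖^2
        = 1/2*‖y‖^2 + 1/2*‖z‖^2 - 1/4*‖y-z‖^2 := by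
      have := mm_mid_norm_sq (0:EuclideanSpace ℝ (Fin p)) y z
      simpa using this
    rw [hmid0] at hφ
    have hmidsum : ∑ i, ‖(1/2:ℝ)•y + (1/2:ℝ)•z - P i x‖^2
        = 1/2 * ∑ i, ‖y - P i x‖^2 + 1/2 * ∑ i, ‖z - P i x‖^2 - (m:ℝ)/4 * ‖y-z‖^2 := by
      rw [Finset.mul_sum, Finset.mul_sum]
      rw [show (m:ℝ)/4 * ‖y-z‖^2 = ∑ _i : Fin m, 1/4*‖y-z‖^2 by
        rw [Finset.sum_const, Finset.card_univ, Fintype.card_fin, nsmul_eq_mul]; ring]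
      rw [← Finset.sum_add_distrib, ← Finset.sum_sub_distrib]
      exact Finset.sum_congr rfl fun i _ => mm_mid_norm_sq (P i x) y z
    simp only [hg_def]
    rw [hmidsum]
    ring_nf
    ring_nf at hφ
    linarith
  have hgrow : ∀ x z, (∀ y, g x z ≤ g x y) →
      ∀ y, g x z + (μ * (m:ℝ) - κ)/4 * ‖y - z‖^2 ≤ g x y := by
    intro x z hz y
    have h1 := hsc x y z
    have h2 := hz ((1/2:ℝ)•y + (1/2:ℝ)•z)
    linarith
  have hex : ∀ x, ∃ z, ∀ y, g x z ≤ g x y := fun x =>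
    (hgc x).exists_forall_le (hgcoer x)
  set ψ : EuclideanSpace ℝ (Fin p) → EuclideanSpace ℝ (Fin p) :=
    fun x => Classical.choose (hex x) with hψ_def
  have hψ : ∀ x, ∀ y, g x (ψ x) ≤ g x y := fun x => Classical.choose_spec (hex x)
  have huniq : ∀ x w, (∀ y, g x w ≤ g x y) → w = ψ x := by
    intro x w hw
    have h1 := hgrow x w hw (ψ x)
    have h2 := hψ x w
    have hX : (μ * (m:ℝ) - κ)/4 * ‖ψ x - w‖^2 ≤ 0 :=
      (add_le_iff_nonpos_right _).1 (h1.trans h2)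
    have hs : ‖ψ x - w‖^2 ≤ 0 := by nlinarith [hX, hc, sq_nonneg ‖ψ x - w‖]
    have h0 : ‖ψ x - w‖^2 = 0 := le_antisymm hs (sq_nonneg _)
    have := sub_eq_zero.1 (norm_eq_zero.1 (by
      have := sq_eq_zero_iff.1 h0
      exact this))
    exact this.symm
  -- quadratic expansion
  have hQid : ∀ (x y : EuclideanSpace ℝ (Fin p)), ∑ i, ‖y - P i x‖^2
      = (m:ℝ)*‖y‖^2 - 2*⟪y, ∑ i, P i x⟫ + ∑ i, ‖P i x‖^2 := by
    intro x y
    rw [Finset.sum_congr rfl fun i _ => norm_sub_sq_real y (P i x),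
      Finset.sum_add_distrib, Finset.sum_sub_distrib, Finset.sum_const,
      Finset.card_univ, Fintype.card_fin, nsmul_eq_mul, ← Finset.mul_sum, ← inner_sum]
  have hkey : ∀ x x', (μ * (m:ℝ) - κ)/2 * ‖ψ x' - ψ x‖^2
      ≤ μ * ⟪ψ x' - ψ x, (∑ i, P i x') - ∑ i, P i x⟫ := by
    intro x x'
    have h1 := hgrow x (ψ x) (hψ x) (ψ x')
    have h2 := hgrow x' (ψ x') (hψ x') (ψ x)
    simp only [hg_def] at h1 h2
    rw [hQid x (ψ x'), hQid x (ψ x)] at h1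
    rw [hQid x' (ψ x'), hQid x' (ψ x)] at h2
    rw [show ‖ψ x - ψ x'‖ = ‖ψ x' - ψ x‖ from norm_sub_rev _ _] at h2
    have hib : ⟪ψ x' - ψ x, (∑ i, P i x') - ∑ i, P i x⟫
        = (⟪ψ x', ∑ i, P i x'⟫ - ⟪ψ x', ∑ i, P i x⟫)
          - (⟪ψ x, ∑ i, P i x'⟫ - ⟪ψ x, ∑ i, P i x⟫) := by
      simp only [inner_sub_left, inner_sub_right]; ring
    rw [hib]
    ring_nf
    ring_nf at h1 h2
    linarith
  have hSlip : ∀ x x', ‖(∑ i, P i x') - ∑ i, P i x‖ ≤ (m:ℝ) * ‖x' - x‖ := by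
    intro x x'
    rw [← Finset.sum_sub_distrib]
    calc ‖∑ i, (P i x' - P i x)‖ ≤ ∑ i, ‖P i x' - P i x‖ := norm_sum_le _ _
      _ ≤ ∑ _i : Fin m, ‖x' - x‖ := Finset.sum_le_sum fun i _ =>
          mm_proj_lipschitz (hcv i) (hP i x').1 (hP i x).1 (hP i x').2 (hP i x).2
      _ = (m:ℝ) * ‖x' - x‖ := by
          rw [Finset.sum_const, Finset.card_univ, Fintype.card_fin, nsmul_eq_mul]
  have hψlip : ∀ x x', ‖ψ x' - ψ x‖ ≤ (2*μ*m/(μ * (m:ℝ) - κ)) * ‖x' - x‖ := by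
    intro x x'
    rcases eq_or_lt_of_le (norm_nonneg (ψ x' - ψ x)) with h | h
    · rw [← h]; positivity
    · have h1 := hkey x x'
      have h2 : ⟪ψ x' - ψ x, (∑ i, P i x') - ∑ i, P i x⟫
          ≤ ‖ψ x' - ψ x‖ * ((m:ℝ) * ‖x' - x‖) :=
        le_trans (real_inner_le_norm _ _)
          (mul_le_mul_of_nonneg_left (hSlip x x') (norm_nonneg _))
      have h3 : (μ * (m:ℝ) - κ)/2 * ‖ψ x' - ψ x‖^2
          ≤ μ * (‖ψ x' - ψ x‖ * ((m:ℝ) * ‖x' - x‖)) :=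
        le_trans h1 (mul_le_mul_of_nonneg_left h2 hμ0.le)
      rw [div_mul_eq_mul_div, le_div_iff₀ hc]
      nlinarith [h3, h]
  have hψcont : Continuous ψ := by
    have hl : LipschitzWith (Real.toNNReal (2*μ*m/(μ * (m:ℝ) - κ))) ψ := by
      apply LipschitzWith.of_dist_le_mul
      intro x x'
      rw [dist_eq_norm, dist_eq_norm,
        Real.coe_toNNReal _ (by positivity : (0:ℝ) ≤ 2*μ*m/(μ * (m:ℝ) - κ)),
        show ψ x - ψ x' = -(ψ x' - ψ x) by abel, norm_neg,
        show x - x' = -(x' - x) by abel, norm_neg]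
      exact hψlip x x'
    exact hl.continuous
  exact ⟨ψ, hψcont, fun x => ⟨hψ x, fun w hw => huniq x w hw⟩⟩
end
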